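/- Let m, n, t be positive integers and let {Ψ_{j1}, …, Ψ_{j(mn)}}, j = 1, …, t, be t mutually unbiased orthonormal bases of ℂ^m ⊗ ℂ^n ≅ ℂ^(mn). Then Σ_{j=1}^{t} Σ_{i=1}^{mn} P(Tr_A(Ψ_{ji} Ψ_{ji}^*)) ≤ (m² + t − 1)·n. -/

import Mathlib

open Matrix Finset

/-- Left partial trace: trace out the first (A) factor. -/
noncomputable def trA {m n : ℕ} (X : Matrix (Fin m × Fin n) (Fin m × Fin n) ℂ) :
    Matrix (Fin n) (Fin n) ℂ :=
  Matrix.of fun j j' => ∑ i : Fin m, X (i, j) (i, j')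

/-!
Regard d × d matrices (d = mn) as vectors of the Hilbert–Schmidt space. There the projectors ψψ*
onto the vectors of one basis are orthonormal and sum to the identity, while projectors from two
different mutually unbiased bases have inner product 1/d. After the component along the identity
is removed, the contributions of different bases become orthogonal, which gives the Bessel-type
bound Σ |⟨ψ, X ψ⟩|² ≤ ‖X‖² + (t - 1) |Tr X|² / d over all basis vectors ψ. The purity of the reduced
state of ψ is Σ_{a,a'} |⟨ψ, (E_{aa'} ⊗ 1) ψ⟩|², and E_{aa'} ⊗ 1 has squared norm n and trace
δ_{aa'} n, so summing the bound over a, a' gives m² n + (t - 1) n.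
-/

open scoped InnerProductSpace ComplexConjugate Kronecker

section Bessel

variable {𝕜 E τ κ : Type*} [RCLike 𝕜] [NormedAddCommGroup E] [InnerProductSpace 𝕜 E]
  [Fintype τ] [Fintype κ]

theorem sum_sum_norm_inner_sq_le_of_sum_inner_eq_zero [DecidableEq τ] (u : τ → κ → E) (s : 𝕜)
    (hu : ∀ j, Orthonormal 𝕜 (u j)) (hs : ∀ j j', j ≠ j' → ∀ i i', ⟪u j i, u j' i'⟫_𝕜 = s)
    (y : E) (hy : ∀ j, ∑ i, ⟪u j i, y⟫_𝕜 = 0) :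
    ∑ j, ∑ i, ‖⟪u j i, y⟫_𝕜‖ ^ 2 ≤ ‖y‖ ^ 2 := by
  set S := ∑ j, ∑ i, ‖⟪u j i, y⟫_𝕜‖ ^ 2
  let z : τ → E := fun j => ∑ i, ⟪u j i, y⟫_𝕜 • u j i
  have hzy : ⟪∑ j, z j, y⟫_𝕜 = S := by
    simp only [z, S, sum_inner, inner_smul_left, RCLike.conj_mul]
    push_cast
    rfl
  have hz_cross : ∀ j j', j ≠ j' → ∀ i', ⟪z j, u j' i'⟫_𝕜 = 0 := by
    intro j j' h i'
    simp only [z, sum_inner, inner_smul_left, hs j j' h, ← Finset.sum_mul, ← map_sum, hy,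
      map_zero, zero_mul]
  have hzz : ⟪∑ j, z j, ∑ j, z j⟫_𝕜 = S := by
    have hzj : ∀ j j', ⟪z j, z j'⟫_𝕜 = if j = j' then ⟪z j, y⟫_𝕜 else 0 := by
      intro j j'
      split_ifs with h
      · subst h
        simp only [z, (hu j).inner_sum, sum_inner, inner_smul_left]
      · simp only [z, inner_sum, inner_smul_right, hz_cross j j' h, mul_zero, sum_const_zero]
    simp_rw [sum_inner, inner_sum, hzj, sum_ite_eq, mem_univ, if_true]
    rw [← sum_inner, hzy]
  have hzn : ‖∑ j, z j‖ ^ 2 = S := by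
    rw [@norm_sq_eq_re_inner 𝕜, hzz, RCLike.ofReal_re]
  have hyz : RCLike.re ⟪y, ∑ j, z j⟫_𝕜 = S := by
    rw [← inner_conj_symm, hzy, RCLike.conj_ofReal, RCLike.ofReal_re]
  nlinarith [norm_sub_sq (𝕜 := 𝕜) y (∑ j, z j), sq_nonneg ‖y - ∑ j, z j‖]

theorem sum_sum_norm_inner_sq_le [DecidableEq τ] [Nonempty τ] (u : τ → κ → E) (s : 𝕜) (w : E)
    (hu : ∀ j, Orthonormal 𝕜 (u j)) (hs : ∀ j j', j ≠ j' → ∀ i i', ⟪u j i, u j' i'⟫_𝕜 = s)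
    (hw : ∀ j, ∑ i, u j i = w) (y : E) :
    ∑ j, ∑ i, ‖⟪u j i, y⟫_𝕜‖ ^ 2
      ≤ ‖y‖ ^ 2 + (Fintype.card τ - 1) * ‖⟪w, y⟫_𝕜‖ ^ 2 / Fintype.card κ := by
  classical
  rcases isEmpty_or_nonempty κ with hκ | hκ
  · simp only [univ_eq_empty, sum_empty, sum_const_zero, Fintype.card_eq_zero, CharP.cast_eq_zero,
      div_zero, add_zero]
    positivity
  obtain ⟨j₀⟩ := ‹Nonempty τ›
  set k : ℝ := (Fintype.card κ : ℝ)
  have hk : k ≠ 0 := Nat.cast_ne_zero.mpr Fintype.card_ne_zero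
  set α : 𝕜 := ⟪w, y⟫_𝕜 / k
  have huw : ∀ j i, ⟪u j i, w⟫_𝕜 = 1 := by
    intro j i
    simp [← hw j, inner_sum, orthonormal_iff_ite.mp (hu j)]
  have hww : ⟪w, w⟫_𝕜 = k := by
    rw [← hw j₀, sum_inner]
    simp [k, hw j₀, huw]
  set y₀ := y - α • w
  have hcoef : ∀ j i, ⟪u j i, y⟫_𝕜 = ⟪u j i, y₀⟫_𝕜 + α := by
    simp [y₀, inner_sub_right, inner_smul_right, huw]
  have hwy₀ : ⟪w, y₀⟫_𝕜 = 0 := by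
    have : (k : 𝕜) ≠ 0 := RCLike.ofReal_ne_zero.mpr hk
    simp only [y₀, α, inner_sub_right, inner_smul_right, hww]
    field_simp
    ring
  have hy₀ : ∀ j, ∑ i, ⟪u j i, y₀⟫_𝕜 = 0 := fun j => by
    rw [← sum_inner, hw j, hwy₀]
  have hw_norm : ‖w‖ ^ 2 = k := by
    rw [@norm_sq_eq_re_inner 𝕜, hww, RCLike.ofReal_re]
  have hy_norm : ‖y‖ ^ 2 = ‖y₀‖ ^ 2 + k * ‖α‖ ^ 2 := by
    have hy₀w : ⟪y₀, α • w⟫_𝕜 = 0 := by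
      rw [inner_smul_right, ← inner_conj_symm, hwy₀, map_zero, mul_zero]
    rw [show y = y₀ + α • w by simp [y₀], norm_add_sq (𝕜 := 𝕜), hy₀w, norm_smul, mul_pow, hw_norm]
    simp only [map_zero]
    ring
  have hrow : ∀ j, ∑ i, ‖⟪u j i, y⟫_𝕜‖ ^ 2 = ∑ i, ‖⟪u j i, y₀⟫_𝕜‖ ^ 2 + k * ‖α‖ ^ 2 := by
    intro j
    have hcross : ∑ i, RCLike.re ⟪⟪u j i, y₀⟫_𝕜, α⟫_𝕜 = 0 := by
      rw [← map_sum, ← sum_inner, hy₀ j, inner_zero_left, map_zero]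
    simp only [hcoef, norm_add_sq (𝕜 := 𝕜), sum_add_distrib, ← mul_sum, hcross]
    simp [k]
  have hα : k * ‖α‖ ^ 2 = ‖⟪w, y⟫_𝕜‖ ^ 2 / k := by
    rw [norm_div, RCLike.norm_ofReal, abs_of_nonneg (Nat.cast_nonneg _)]
    field_simp
  calc ∑ j, ∑ i, ‖⟪u j i, y⟫_𝕜‖ ^ 2
      = ∑ j, ∑ i, ‖⟪u j i, y₀⟫_𝕜‖ ^ 2 + Fintype.card τ * (k * ‖α‖ ^ 2) := by
        simp [hrow, sum_add_distrib]
    _ ≤ ‖y₀‖ ^ 2 + Fintype.card τ * (k * ‖α‖ ^ 2) := by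
        gcongr
        exact sum_sum_norm_inner_sq_le_of_sum_inner_eq_zero u s hu hs y₀ hy₀
    _ = ‖y‖ ^ 2 + (Fintype.card τ - 1) * ‖⟪w, y⟫_𝕜‖ ^ 2 / Fintype.card κ := by
        rw [hy_norm]
        linear_combination (Fintype.card τ - 1 : ℝ) * hα

end Bessel

namespace Matrix

open WithLp

variable {𝕜 ι κ τ : Type*} [RCLike 𝕜] [Fintype ι] [Fintype κ]

theorem inner_toLp_vec (A B : Matrix ι ι 𝕜) :
    ⟪toLp 2 (vec A), toLp 2 (vec B)⟫_𝕜 = (Aᴴ * B).trace := by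
  rw [EuclideanSpace.inner_toLp_toLp, dotProduct_comm, star_vec_dotProduct_vec]

theorem trace_conjTranspose_vecMulVec_mul (ψ : ι → 𝕜) (X : Matrix ι ι 𝕜) :
    ((vecMulVec ψ (star ψ))ᴴ * X).trace = star ψ ⬝ᵥ X *ᵥ ψ := by
  rw [conjTranspose_vecMulVec, star_star, vecMulVec_mul, trace_vecMulVec, dotProduct_comm,
    dotProduct_mulVec]

theorem star_dotProduct_vecMulVec_mulVec (ψ φ : ι → 𝕜) :
    star ψ ⬝ᵥ vecMulVec φ (star φ) *ᵥ ψ = ((‖star ψ ⬝ᵥ φ‖ ^ 2 : ℝ) : 𝕜) := by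
  rw [vecMulVec_mulVec, op_smul_eq_smul, dotProduct_smul, star_dotProduct, smul_eq_mul,
    RCLike.star_def, RCLike.conj_mul]
  push_cast
  rfl

theorem sum_vecMulVec_star_eq_one [DecidableEq ι] [DecidableEq κ] (ψ : κ → ι → 𝕜)
    (hcard : Fintype.card κ = Fintype.card ι)
    (horth : ∀ i i', star (ψ i) ⬝ᵥ ψ i' = if i = i' then 1 else 0) :
    ∑ i, vecMulVec (ψ i) (star (ψ i)) = 1 := by
  have hAB : (of fun i => star (ψ i)) * (of ψ)ᵀ = 1 := by
    ext i i'
    rw [mul_apply', one_apply]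
    exact horth i i'
  ext x y
  have := congrFun (congrFun ((mul_eq_one_comm_of_card_eq κ ι 𝕜 hcard).mp hAB) x) y
  simpa [mul_apply, vecMulVec_apply, sum_apply, mul_comm] using this

theorem sum_sum_norm_star_dotProduct_mulVec_sq_le [DecidableEq ι] [DecidableEq κ]
    [Fintype τ] [DecidableEq τ] [Nonempty τ] (ψ : τ → κ → ι → 𝕜)
    (hcard : Fintype.card κ = Fintype.card ι)
    (horth : ∀ j i i', star (ψ j i) ⬝ᵥ ψ j i' = if i = i' then 1 else 0)
    (hmub : ∀ j j', j ≠ j' → ∀ i i', ‖star (ψ j i) ⬝ᵥ ψ j' i'‖ ^ 2 = 1 / Fintype.card ι)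
    (X : Matrix ι ι 𝕜) :
    ∑ j, ∑ i, ‖star (ψ j i) ⬝ᵥ X *ᵥ ψ j i‖ ^ 2
      ≤ RCLike.re (Xᴴ * X).trace + (Fintype.card τ - 1) * ‖X.trace‖ ^ 2 / Fintype.card ι := by
  let u : τ → κ → EuclideanSpace 𝕜 (ι × ι) := fun j i =>
    toLp 2 (vec (vecMulVec (ψ j i) (star (ψ j i))))
  have hinner : ∀ j i (Y : Matrix ι ι 𝕜), ⟪u j i, toLp 2 (vec Y)⟫_𝕜 = star (ψ j i) ⬝ᵥ Y *ᵥ ψ j i :=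
    fun j i Y => by rw [inner_toLp_vec, trace_conjTranspose_vecMulVec_mul]
  have hu : ∀ j, Orthonormal 𝕜 (u j) := by
    intro j
    rw [orthonormal_iff_ite]
    intro i i'
    rw [hinner, star_dotProduct_vecMulVec_mulVec, horth]
    split_ifs <;> simp
  have hs : ∀ j j', j ≠ j' → ∀ i i', ⟪u j i, u j' i'⟫_𝕜 = ((1 / Fintype.card ι : ℝ) : 𝕜) := by
    intro j j' h i i'
    rw [hinner, star_dotProduct_vecMulVec_mulVec, hmub j j' h]
  have hw : ∀ j, ∑ i, u j i = toLp 2 (vec (1 : Matrix ι ι 𝕜)) := by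
    intro j
    rw [← sum_vecMulVec_star_eq_one (ψ j) hcard (horth j), vec_sum, toLp_sum]
  have key := sum_sum_norm_inner_sq_le u _ _ hu hs hw (toLp 2 (vec X))
  simp only [hinner, inner_toLp_vec, conjTranspose_one, one_mul, hcard] at key
  rwa [@norm_sq_eq_re_inner 𝕜, inner_toLp_vec] at key

section Kronecker

variable {α β : Type*} [Fintype α] [DecidableEq α] [Fintype β] [DecidableEq β]

theorem star_dotProduct_single_kronecker_one_mulVec (ψ : α × β → 𝕜) (a a' : α) :
    star ψ ⬝ᵥ (single a a' (1 : 𝕜) ⊗ₖ (1 : Matrix β β 𝕜)) *ᵥ ψ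
      = ∑ b, star (ψ (a, b)) * ψ (a', b) := by
  simp [dotProduct, mulVec, single_apply, one_apply, Fintype.sum_prod_type, ite_and]

theorem trace_single_kronecker_one (a a' : α) :
    (single a a' (1 : 𝕜) ⊗ₖ (1 : Matrix β β 𝕜)).trace
      = if a = a' then (Fintype.card β : 𝕜) else 0 := by
  rw [trace_kronecker, trace_one]
  split_ifs with h
  · rw [h, trace_single_eq_same, one_mul]
  · simp [trace_single_eq_of_ne _ _ _ h]

theorem re_trace_conjTranspose_mul_single_kronecker_one (a a' : α) :
    RCLike.re ((single a a' (1 : 𝕜) ⊗ₖ (1 : Matrix β β 𝕜))ᴴ * (single a a' 1 ⊗ₖ 1)).trace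
      = Fintype.card β := by
  rw [conjTranspose_kronecker, ← mul_kronecker_mul, conjTranspose_single, conjTranspose_one,
    single_mul_single_same]
  simp [trace_single_kronecker_one]

end Kronecker

end Matrix

theorem trace_trA_vecMulVec_sq {m n : ℕ} (ψ : Fin m × Fin n → ℂ) :
    (trA (vecMulVec ψ (star ψ)) ^ 2).trace
      = ∑ a, ∑ a', ((‖∑ b, star (ψ (a, b)) * ψ (a', b)‖ ^ 2 : ℝ) : ℂ) := by
  simp only [Complex.ofReal_pow, ← Complex.conj_mul', map_sum, map_mul, RCLike.star_def,
    Complex.conj_conj, sum_mul_sum]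
  simp only [trace, Matrix.diag, sq, mul_apply, trA, of_apply, vecMulVec_apply, Pi.star_apply,
    RCLike.star_def, sum_mul_sum,
    sum_comm (s := (univ : Finset (Fin n))) (t := (univ : Finset (Fin m)))]
  exact sum_congr rfl fun _ _ => sum_congr rfl fun _ _ =>
    sum_congr rfl fun _ _ => sum_congr rfl fun _ _ => by ring

theorem mub_purity_bound_complex (m n t : ℕ) (hm : 0 < m) (ht : 0 < t)
    (Ψ : Fin t → Fin (m * n) → (Fin m × Fin n) → ℂ)
    (horth : ∀ j, ∀ i i' : Fin (m * n),
      (∑ a, star (Ψ j i a) * Ψ j i' a) = if i = i' then 1 else 0)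
    (hmub : ∀ j j', j ≠ j' → ∀ i i' : Fin (m * n),
      ‖∑ a, star (Ψ j i a) * Ψ j' i' a‖ = 1 / Real.sqrt (m * n)) :
    ∑ j : Fin t, ∑ i : Fin (m * n),
        (Matrix.trace (trA (Matrix.vecMulVec (Ψ j i) (star (Ψ j i))) ^ 2)).re
      ≤ ((m : ℝ) ^ 2 + (t : ℝ) - 1) * n := by
  have : Nonempty (Fin t) := ⟨⟨0, ht⟩⟩
  have hcard : Fintype.card (Fin (m * n)) = Fintype.card (Fin m × Fin n) := by simp
  have hmub' : ∀ j j', j ≠ j' → ∀ i i',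
      ‖star (Ψ j i) ⬝ᵥ Ψ j' i'‖ ^ 2 = 1 / Fintype.card (Fin m × Fin n) := by
    intro j j' h i i'
    rw [show star (Ψ j i) ⬝ᵥ Ψ j' i' = ∑ a, star (Ψ j i a) * Ψ j' i' a from rfl, hmub j j' h i i',
      div_pow, Real.sq_sqrt (by positivity)]
    simp
  have hblock (a a' : Fin m) := sum_sum_norm_star_dotProduct_mulVec_sq_le Ψ hcard horth
    hmub' (single a a' 1 ⊗ₖ 1)
  simp only [re_trace_conjTranspose_mul_single_kronecker_one, trace_single_kronecker_one,
    star_dotProduct_single_kronecker_one_mulVec] at hblock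
  calc ∑ j : Fin t, ∑ i : Fin (m * n),
        (Matrix.trace (trA (Matrix.vecMulVec (Ψ j i) (star (Ψ j i))) ^ 2)).re
      = ∑ a, ∑ a', ∑ j, ∑ i, ‖∑ b, star (Ψ j i (a, b)) * Ψ j i (a', b)‖ ^ 2 := by
        simp only [trace_trA_vecMulVec_sq, Complex.re_sum, Complex.ofReal_re,
          sum_comm (s := (univ : Finset (Fin (m * n)))) (t := (univ : Finset (Fin m))),
          sum_comm (s := (univ : Finset (Fin t))) (t := (univ : Finset (Fin m)))]
    _ ≤ ∑ a : Fin m, ∑ a' : Fin m, ((n : ℝ) + if a = a' then ((t : ℝ) - 1) * n / m else 0) := by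
        gcongr with a _ a' _
        refine (hblock a a').trans_eq ?_
        split_ifs <;> simp
        field_simp
    _ = ((m : ℝ) ^ 2 + (t : ℝ) - 1) * n := by
        simp [sum_add_distrib]
        field_simp
        ring
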